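/- arXiv:1701.02564 — 2 statements merged into one kernel-verified Lean document; each statement's English description precedes it below -/
import Mathlib

section
/- Let H be a complex Hilbert space, J a nonempty countable index set, and u_i, v_i ∈ B(H) (i ∈ J) such that v_i u_j = δ_{ij} I for all i,j ∈ J and, for every ξ ∈ H, the family (u_i(v_i ξ))_{i∈J} sums unconditionally to ξ. Let x ∈ B(H) and suppose α(x) ∈ B(H) is an operator such that for every ξ ∈ H the family (u_i(x(v_i ξ)))_{i∈J} sums unconditionally to α(x)ξ. Then for every y ∈ B(H): α(x)y = yα(x) if and only if x·(v_j y u_k) = (v_j y u_k)·x for all j, k ∈ J. -/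
open scoped ENNReal
open ContinuousLinearMap

noncomputable section

/-- `ℓ²(Λ; H)`: square-summable `H`-valued families indexed by `Λ`. -/
abbrev L2 (Λ : Type*) (H : Type*) [NormedAddCommGroup H] [InnerProductSpace ℂ H] :
    Type _ :=
  lp (fun _ : Λ => H) 2

variable {Λ H : Type*} [NormedAddCommGroup H] [InnerProductSpace ℂ H]

open Classical in
/-- `ξ ⊗ e_w`: the element of `ℓ²(Λ;H)` supported at `w` with value `ξ`. -/
def el (w : Λ) (ξ : H) : L2 Λ H := lp.single 2 w ξ

open Classical in
/-- `ξ ↦ ξ ⊗ e_w` as a continuous linear map. -/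
def elCLM (w : Λ) : H →L[ℂ] L2 Λ H :=
  LinearMap.mkContinuous
    { toFun := fun ξ => el w ξ
      map_add' := by
        intro ξ η
        apply lp.ext
        funext j
        by_cases h : j = w
        · subst h; simp [el, lp.single_apply_self]
        · simp [el, lp.single_apply_ne _ _ _ h]
      map_smul' := by
        intro c ξ
        simp [el, lp.single_smul] }
    1
    (by
      intro ξ
      simp only [LinearMap.coe_mk, AddHom.coe_mk, one_mul]
      exact le_of_eq (lp.norm_single (E := fun _ : Λ => H) (p := 2) (by norm_num) w ξ))

/-- Evaluation at coordinate `w` as a continuous linear map. -/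
def coordCLM (w : Λ) : L2 Λ H →L[ℂ] H :=
  LinearMap.mkContinuous
    { toFun := fun f => f w
      map_add' := by intro f g; simp
      map_smul' := by intro c f; simp }
    1
    (by
      intro f
      rw [one_mul]
      exact lp.norm_apply_le_norm (by norm_num) f w)

/-- The `(μ,ν)` matrix entry of an operator on `ℓ²(Λ;H)`. -/
def entry (T : L2 Λ H →L[ℂ] L2 Λ H) (μ ν : Λ) : H →L[ℂ] H :=
  (coordCLM μ).comp (T.comp (elCLM ν))

/-- Membership in the closure of `S` for the weak operator topology. -/
def InWOTClosure {E : Type*} [NormedAddCommGroup E] [InnerProductSpace ℂ E]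
    (S : Set (E →L[ℂ] E)) (T : E →L[ℂ] E) : Prop :=
  ∀ ε > (0 : ℝ), ∀ (n : ℕ) (ξ η : Fin n → E),
    ∃ A ∈ S, ∀ i, ‖(inner ℂ ((T - A) (ξ i)) (η i) : ℂ)‖ < ε

/-- The closure of `S` in the weak operator topology. -/
def wotClosure {E : Type*} [NormedAddCommGroup E] [InnerProductSpace ℂ E]
    (S : Set (E →L[ℂ] E)) : Set (E →L[ℂ] E) :=
  { T | InWOTClosure S T }

/-- A set of operators is WOT-closed. -/
def IsWOTClosed {E : Type*} [NormedAddCommGroup E] [InnerProductSpace ℂ E]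
    (S : Set (E →L[ℂ] E)) : Prop :=
  wotClosure S ⊆ S

/-- A set `S` of operators is reflexive if any operator `T` such that `T h` lies in the
norm-closure of `S h` for every vector `h` belongs to `S`. -/
def IsReflexiveSet {E : Type*} [NormedAddCommGroup E] [InnerProductSpace ℂ E]
    (S : Set (E →L[ℂ] E)) : Prop :=
  ∀ T : E →L[ℂ] E, (∀ h : E, T h ∈ closure ((fun A : E →L[ℂ] E => A h) '' S)) → T ∈ S

/-- The WOT-closed linear span of a set of operators. -/
def wotSpan {E : Type*} [NormedAddCommGroup E] [InnerProductSpace ℂ E]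
    (S : Set (E →L[ℂ] E)) : Set (E →L[ℂ] E) :=
  wotClosure ((Submodule.span ℂ S : Submodule ℂ (E →L[ℂ] E)) : Set (E →L[ℂ] E))

/-- The reversed word. -/
def rev {ι : Type*} (μ : FreeMonoid ι) : FreeMonoid ι :=
  FreeMonoid.ofList (FreeMonoid.toList μ).reverse

/-- Length of a word. -/
def len {ι : Type*} (μ : FreeMonoid ι) : ℕ := (FreeMonoid.toList μ).length

/-- For `α : ι → (X → X)` and a word `μ = μ_m ⋯ μ_1`, the composition
`α_μ = α_{μ_m} ∘ ⋯ ∘ α_{μ_1}`. -/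
def wordMap {ι X : Type*} (α : ι → X → X) (μ : FreeMonoid ι) : X → X :=
  ((FreeMonoid.toList μ).map α).foldr (· ∘ ·) id

/-- For commuting maps `α_1,…,α_d` and `n ∈ ℕ^d`, the composition
`α^n = α_1^{n_1} ∘ ⋯ ∘ α_d^{n_d}`. -/
def multiIter {X : Type*} {d : ℕ} (α : Fin d → X → X) (n : Fin d → ℕ) : X → X :=
  (List.ofFn fun i => (α i)^[n i]).foldr (· ∘ ·) id

/-- The commutant of a set of operators. -/
def commutantS {E : Type*} [NormedAddCommGroup E] [InnerProductSpace ℂ E]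
    (S : Set (E →L[ℂ] E)) : Set (E →L[ℂ] E) :=
  { T | ∀ s ∈ S, T * s = s * T }

/-!
Writing `α(x) = Σ u_i x v_i` and using `v_j u_i = δ_{ij}`, the column entries `v_j` and the row
entries `u_k` intertwine `x` with `α(x)`: `v_j α(x) = x v_j` and `α(x) u_k = u_k x`. Hence the
compression `v_j (α(x) y) u_k` is `x (v_j y u_k)` and `v_j (y α(x)) u_k` is `(v_j y u_k) x`, and
an operator is determined by its compressions because `Σ u_i v_i = I`.
-/

namespace RowOperator

variable {R M J : Type*} [Semiring R] [AddCommMonoid M] [TopologicalSpace M] [Module R M]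
  [T2Space M] {u v : J → M →L[R] M}

theorem eq_of_forall_mul_row_eq (hsum : ∀ ξ, HasSum (fun i => u i (v i ξ)) ξ)
    {X Y : M →L[R] M} (h : ∀ k, X * u k = Y * u k) : X = Y := by
  ext ξ
  have hX : HasSum (fun i => (X * u i) (v i ξ)) (X ξ) := X.hasSum (hsum ξ)
  simp only [h] at hX
  exact hX.unique (Y.hasSum (hsum ξ))

theorem eq_of_forall_col_mul_eq (hsum : ∀ ξ, HasSum (fun i => u i (v i ξ)) ξ)
    {X Y : M →L[R] M} (h : ∀ j, v j * X = v j * Y) : X = Y := by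
  ext ξ
  have hX : HasSum (fun i => u i ((v i * X) ξ)) (X ξ) := hsum (X ξ)
  simp only [h] at hX
  exact hX.unique (hsum (Y ξ))

theorem eq_iff_forall_compression_eq (hsum : ∀ ξ, HasSum (fun i => u i (v i ξ)) ξ)
    {X Y : M →L[R] M} : X = Y ↔ ∀ j k, v j * X * u k = v j * Y * u k :=
  ⟨fun h _ _ => h ▸ rfl, fun h =>
    eq_of_forall_col_mul_eq hsum fun j => eq_of_forall_mul_row_eq hsum (h j)⟩

theorem col_mul_eq_mul_col (hvu : ∀ i, v i * u i = 1) (hvu' : ∀ i j, i ≠ j → v i * u j = 0)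
    {x αx : M →L[R] M} (hαx : ∀ ξ, HasSum (fun i => u i (x (v i ξ))) (αx ξ)) (j : J) :
    v j * αx = x * v j := by
  ext ξ
  refine ((v j).hasSum (hαx ξ)).unique (hasSum_single j fun i hij => ?_) |>.trans ?_
  · rw [← mul_apply_eq_comp, hvu' j i hij.symm, zero_apply]
  · rw [← mul_apply_eq_comp (v j), hvu, one_apply_eq_self, mul_apply_eq_comp]

theorem mul_row_eq_row_mul (hvu : ∀ i, v i * u i = 1) (hvu' : ∀ i j, i ≠ j → v i * u j = 0)
    {x αx : M →L[R] M} (hαx : ∀ ξ, HasSum (fun i => u i (x (v i ξ))) (αx ξ)) (k : J) :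
    αx * u k = u k * x := by
  ext ξ
  refine (hαx (u k ξ)).unique (hasSum_single k fun i hik => ?_) |>.trans ?_
  · rw [← mul_apply_eq_comp (v i), hvu' i k hik, zero_apply, map_zero, map_zero]
  · rw [← mul_apply_eq_comp (v k), hvu, one_apply_eq_self, mul_apply_eq_comp]

end RowOperator

open RowOperator in
theorem statement7_general
    {H : Type*} [NormedAddCommGroup H] [InnerProductSpace ℂ H]
    {J : Type*}
    (u v : J → (H →L[ℂ] H))
    (hvu : ∀ i : J, v i * u i = 1)
    (hvu' : ∀ i j : J, i ≠ j → v i * u j = 0)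
    (hsum : ∀ ξ : H, HasSum (fun i : J => u i (v i ξ)) ξ)
    (x αx : H →L[ℂ] H)
    (hαx : ∀ ξ : H, HasSum (fun i : J => u i (x (v i ξ))) (αx ξ))
    (y : H →L[ℂ] H) :
    αx * y = y * αx ↔ ∀ j k : J, x * (v j * y * u k) = (v j * y * u k) * x := by
  rw [eq_iff_forall_compression_eq hsum]
  refine forall₂_congr fun j k => ?_
  rw [← mul_assoc (v j), col_mul_eq_mul_col hvu hvu' hαx, mul_assoc (v j), mul_assoc y,
    mul_row_eq_row_mul hvu hvu' hαx]
  simp only [mul_assoc]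

/-- commutation criterion for endomorphisms induced by invertible row
operators. -/
theorem statement7
    {H : Type*} [NormedAddCommGroup H] [InnerProductSpace ℂ H] [CompleteSpace H]
    {J : Type*} [Countable J] [Nonempty J]
    (u v : J → (H →L[ℂ] H))
    (hvu : ∀ i : J, v i * u i = 1)
    (hvu' : ∀ i j : J, i ≠ j → v i * u j = 0)
    (hsum : ∀ ξ : H, HasSum (fun i : J => u i (v i ξ)) ξ)
    (x αx : H →L[ℂ] H)
    (hαx : ∀ ξ : H, HasSum (fun i : J => u i (x (v i ξ))) (αx ξ))
    (y : H →L[ℂ] H) :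
    αx * y = y * αx ↔ ∀ j k : J, x * (v j * y * u k) = (v j * y * u k) * x :=
  statement7_general u v hvu hvu' hsum x αx hαx y
end
end

section
/- Let H = ℓ²(ℕ;ℂ) with standard orthonormal basis (δ_n)_{n∈ℕ}, and let S₁, S₂ ∈ B(H) be the bounded operators determined by S₁δ_n = δ_{2n} and S₂δ_n = δ_{2n+1}. Let U ∈ B(H) be unitary (U*U = UU* = I). Then the following are equivalent: (i) for every x ∈ B(H), U(S₁xS₁* + S₂xS₂*)U* = S₁(UxU*)S₁* + S₂(UxU*)S₂*; (ii) there exist λ, μ ∈ ℂ with |λ| = |μ| = 1 such that Uδ_n = λμ^{φ(n)}δ_n for every n ∈ ℕ, where φ(n) denotes the number of 1's in the binary expansion of n. -/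
open scoped ENNReal
open ContinuousLinearMap

noncomputable section

variable {Λ H : Type*} [NormedAddCommGroup H] [InnerProductSpace ℂ H]

open scoped Matrix

/-! Write `ρ(x) = S₁xS₁* + S₂xS₂*`. If `Ad U` commutes with `ρ`, then `Vᵢ = USᵢU*` is a second
Cuntz family implementing `ρ`, so every `Sₖ*Vⱼ` commutes with all of `B(H)` and is a scalar
`cₖⱼ`; the matrix `c` is unitary and `USⱼ = ∑ₖ cₖⱼ SₖU`. Since `δ₀ = S₁δ₀`, the vector `Uδ₀` is a
nonzero solution of `ξ = c₁₁S₁ξ + c₂₁S₂ξ`, and reading this at the coordinates `0, 2k, 2k+1`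
forces `c₁₁ = 1`. Unitarity then gives `c = diag(1, μ)` with `|μ| = 1`, so `US₁ = S₁U`,
`US₂ = μS₂U` and `Uδ₀ = λδ₀`, and recursion on the binary digits gives `Uδₙ = λμ^φ(n) δₙ`.
Conversely, these commutation relations give `USᵢxSᵢ*U* = Sᵢ(UxU*)Sᵢ*` term by term. -/

section Cuntz

variable {ι A : Type*} [Fintype ι] [Ring A] [StarRing A]

structure IsCuntzFamily (S : ι → A) : Prop where
  star_mul_self : ∀ i, star (S i) * S i = 1
  star_mul_of_ne : ∀ {i j}, i ≠ j → star (S i) * S j = 0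
  sum_mul_star : ∑ i, S i * star (S i) = 1

def cuntzEndo (S : ι → A) (x : A) : A := ∑ i, S i * x * star (S i)

lemma cuntzEndo_conj (S : ι → A) (u y : A) :
    cuntzEndo (fun i => u * S i * star u) y = u * cuntzEndo S (star u * y * u) * star u := by
  simp only [cuntzEndo, Finset.mul_sum, Finset.sum_mul, star_mul, star_star, mul_assoc]

lemma IsCuntzFamily.conj {S : ι → A} (hS : IsCuntzFamily S) {u : A} (hu : u ∈ unitary A) :
    IsCuntzFamily (fun i => u * S i * star u) := by
  have hconj : ∀ i j, star (u * S i * star u) * (u * S j * star u) =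
      u * (star (S i) * S j) * star u := by
    intro i j
    simp only [star_mul, star_star, mul_assoc]
    rw [← mul_assoc (star u) u, Unitary.star_mul_self_of_mem hu, one_mul]
  refine ⟨fun i => ?_, fun hij => ?_, ?_⟩
  · rw [hconj, hS.star_mul_self, mul_one, Unitary.mul_star_self_of_mem hu]
  · rw [hconj, hS.star_mul_of_ne hij, mul_zero, zero_mul]
  · have := cuntzEndo_conj S u 1
    simp only [cuntzEndo, mul_one, Unitary.star_mul_self_of_mem hu, hS.sum_mul_star] at this
    rw [this, Unitary.mul_star_self_of_mem hu]

lemma IsCuntzFamily.mul_cuntzEndo {S : ι → A} (hS : IsCuntzFamily S) (x : A) (j : ι) :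
    cuntzEndo S x * S j = S j * x := by
  rw [cuntzEndo, Finset.sum_mul, Finset.sum_eq_single j]
  · rw [mul_assoc, hS.star_mul_self, mul_one]
  · intro i _ hij
    rw [mul_assoc, hS.star_mul_of_ne hij, mul_zero]
  · simp

lemma IsCuntzFamily.star_mul_cuntzEndo {S : ι → A} (hS : IsCuntzFamily S) (x : A) (k : ι) :
    star (S k) * cuntzEndo S x = x * star (S k) := by
  rw [cuntzEndo, Finset.mul_sum, Finset.sum_eq_single k]
  · rw [← mul_assoc, ← mul_assoc, hS.star_mul_self, one_mul]
  · intro i _ hik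
    rw [← mul_assoc, ← mul_assoc, hS.star_mul_of_ne hik.symm, zero_mul, zero_mul]
  · simp

lemma IsCuntzFamily.commute_star_mul {S V : ι → A} (hS : IsCuntzFamily S) (hV : IsCuntzFamily V)
    (h : cuntzEndo V = cuntzEndo S) (k j : ι) (x : A) : Commute x (star (S k) * V j) :=
  calc x * (star (S k) * V j) = star (S k) * cuntzEndo S x * V j := by
        rw [hS.star_mul_cuntzEndo, mul_assoc]
    _ = star (S k) * V j * x := by rw [← h, mul_assoc, hV.mul_cuntzEndo, mul_assoc]

lemma IsCuntzFamily.exists_unitary_matrix_of_cuntzEndo_eq {K : Type*} [Field K] [StarRing K]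
    [DecidableEq ι] [Algebra K A] [StarModule K A] [Algebra.IsCentral K A] [Nontrivial A]
    {S V : ι → A} (hS : IsCuntzFamily S) (hV : IsCuntzFamily V)
    (h : cuntzEndo V = cuntzEndo S) :
    ∃ c : Matrix ι ι K, (∀ j, V j = ∑ k, c k j • S k) ∧ cᴴ * c = 1 := by
  have hcentral : ∀ k j, ∃ a : K, star (S k) * V j = algebraMap K A a := fun k j =>
    (Algebra.IsCentral.mem_center_iff K).1 <|
      Subalgebra.mem_center_iff.2 fun x => (hS.commute_star_mul hV h k j x).eq
  obtain ⟨c, hc⟩ : ∃ c : Matrix ι ι K, ∀ k j, star (S k) * V j = algebraMap K A (c k j) :=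
    ⟨_, fun k j => (hcentral k j).choose_spec⟩
  have hV_eq : ∀ j, V j = ∑ k, c k j • S k := fun j =>
    calc V j = (∑ k, S k * star (S k)) * V j := by rw [hS.sum_mul_star, one_mul]
      _ = ∑ k, c k j • S k := by
        simp only [Finset.sum_mul]
        exact Finset.sum_congr rfl fun k _ => by
          rw [mul_assoc, hc, ← Algebra.commutes, ← Algebra.smul_def]
  refine ⟨c, hV_eq, ?_⟩
  ext i j
  apply (algebraMap K A).injective
  calc algebraMap K A ((cᴴ * c) i j)
      = ∑ k, star (star (S k) * V i) * (star (S k) * V j) := by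
        simp only [Matrix.mul_apply, Matrix.conjTranspose_apply, map_sum, map_mul, hc,
          algebraMap_star_comm]
    _ = star (V i) * (∑ k, S k * star (S k)) * V j := by
        simp only [Finset.sum_mul, Finset.mul_sum, star_mul, star_star, mul_assoc]
    _ = algebraMap K A ((1 : Matrix ι ι K) i j) := by
        rw [hS.sum_mul_star, mul_one, Matrix.one_apply]
        split_ifs with hij
        · rw [hij, hV.star_mul_self, map_one]
        · rw [hV.star_mul_of_ne hij, map_zero]

lemma IsCuntzFamily.exists_unitary_matrix_of_conj_cuntzEndo {K : Type*} [Field K] [StarRing K]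
    [DecidableEq ι] [Algebra K A] [StarModule K A] [Algebra.IsCentral K A] [Nontrivial A]
    {S : ι → A} (hS : IsCuntzFamily S) {u : A} (hu : u ∈ unitary A)
    (h : ∀ x, u * cuntzEndo S x * star u = cuntzEndo S (u * x * star u)) :
    ∃ c : Matrix ι ι K, (∀ j, u * S j = ∑ k, c k j • (S k * u)) ∧ cᴴ * c = 1 := by
  have hV : cuntzEndo (fun i => u * S i * star u) = cuntzEndo S := funext fun y => by
    rw [cuntzEndo_conj, h, ← mul_assoc, ← mul_assoc, Unitary.mul_star_self_of_mem hu, one_mul,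
      mul_assoc, Unitary.mul_star_self_of_mem hu, mul_one]
  obtain ⟨c, hc, hcu⟩ := hS.exists_unitary_matrix_of_cuntzEndo_eq (K := K) (hS.conj hu) hV
  refine ⟨c, fun j => ?_, hcu⟩
  calc u * S j = u * S j * star u * u := by
        rw [mul_assoc _ (star u), Unitary.star_mul_self_of_mem hu, mul_one]
    _ = ∑ k, c k j • (S k * u) := by
        rw [hc, Finset.sum_mul]
        simp only [smul_mul_assoc]

lemma conj_cuntzEndo_of_mul_eq_smul {K : Type*} [CommSemiring K] [StarRing K] [Algebra K A]
    [StarModule K A] {S : ι → A} {u : A} {c : ι → K} (hc : ∀ i, star (c i) * c i = 1)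
    (hu : ∀ i, u * S i = c i • (S i * u)) (x : A) :
    u * cuntzEndo S x * star u = cuntzEndo S (u * x * star u) := by
  simp only [cuntzEndo, Finset.mul_sum, Finset.sum_mul]
  refine Finset.sum_congr rfl fun i _ => ?_
  calc u * (S i * x * star (S i)) * star u = u * S i * x * star (u * S i) := by
        simp only [star_mul, mul_assoc]
    _ = S i * (u * x * star u) * star (S i) := by
        simp only [hu, star_smul, star_mul, smul_mul_assoc, mul_smul_comm, smul_smul, hc,
          one_smul, mul_assoc]

end Cuntz

section L2

lemma el_apply_self (n : Λ) (c : ℂ) : el n c n = c := by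
  classical
  exact lp.single_apply_self _ _ _

lemma el_apply_of_ne {n k : Λ} (h : k ≠ n) (c : ℂ) : el n c k = 0 := by
  classical
  exact lp.single_apply_ne _ _ _ h

lemma el_eq_smul (n : Λ) (c : ℂ) : el n c = c • el n (1 : ℂ) := by
  classical
  simp only [el, ← lp.single_smul, smul_eq_mul, mul_one]

lemma norm_el (n : Λ) (c : ℂ) : ‖el n c‖ = ‖c‖ := by
  classical
  exact lp.norm_single (E := fun _ : Λ => ℂ) (p := 2) (by norm_num) n c

lemma inner_el_one (k : Λ) (f : L2 Λ ℂ) : inner ℂ (el k (1 : ℂ)) f = f k := by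
  classical
  rw [el, lp.inner_single_left]
  simp

lemma ContinuousLinearMap.ext_el {T T' : L2 Λ ℂ →L[ℂ] L2 Λ ℂ}
    (h : ∀ n, T (el n (1 : ℂ)) = T' (el n (1 : ℂ))) : T = T' := by
  classical
  ext1 f
  have hf : HasSum (fun n => el n (f n)) f := by
    simpa [el] using lp.hasSum_single (E := fun _ : Λ => ℂ) ENNReal.ofNat_ne_top f
  refine (hf.mapL T).unique ?_
  simpa only [el_eq_smul _ (f _), map_smul, h] using hf.mapL T'

variable {S : L2 Λ ℂ →L[ℂ] L2 Λ ℂ} {g : Λ → Λ}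

lemma adjoint_apply_of_apply_el (hS : ∀ n, S (el n (1 : ℂ)) = el (g n) (1 : ℂ))
    (f : L2 Λ ℂ) (k : Λ) : adjoint S f k = f (g k) := by
  rw [← inner_el_one, adjoint_inner_right, hS, inner_el_one]

lemma apply_apply_of_apply_el (hg : g.Injective) (hS : ∀ n, S (el n (1 : ℂ)) = el (g n) (1 : ℂ))
    (f : L2 Λ ℂ) (k : Λ) : S f (g k) = f k := by
  have : adjoint S (el (g k) (1 : ℂ)) = el k (1 : ℂ) := lp.ext <| funext fun j => by
    rw [adjoint_apply_of_apply_el hS]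
    rcases eq_or_ne j k with rfl | hj
    · rw [el_apply_self, el_apply_self]
    · rw [el_apply_of_ne (hg.ne hj), el_apply_of_ne hj]
  rw [← inner_el_one, ← adjoint_inner_left, this, inner_el_one]

lemma apply_apply_of_notMem_range (hS : ∀ n, S (el n (1 : ℂ)) = el (g n) (1 : ℂ))
    (f : L2 Λ ℂ) {m : Λ} (hm : m ∉ Set.range g) : S f m = 0 := by
  have : adjoint S (el m (1 : ℂ)) = 0 := lp.ext <| funext fun j => by
    rw [adjoint_apply_of_apply_el hS, el_apply_of_ne fun h => hm ⟨j, h⟩]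
    rfl
  rw [← inner_el_one, ← adjoint_inner_left, this, inner_zero_left]

end L2

lemma Nat.count_one_digits_two_mul (n : ℕ) :
    (Nat.digits 2 (2 * n)).count 1 = (Nat.digits 2 n).count 1 := by
  rcases Nat.eq_zero_or_pos n with rfl | hn
  · rfl
  · rw [Nat.digits_def' one_lt_two (by omega), Nat.mul_mod_right,
      Nat.mul_div_cancel_left _ two_pos]
    simp

lemma Nat.count_one_digits_two_mul_add_one (n : ℕ) :
    (Nat.digits 2 (2 * n + 1)).count 1 = (Nat.digits 2 n).count 1 + 1 := by
  rw [Nat.digits_def' one_lt_two (by omega), Nat.mul_add_mod, Nat.mul_add_div two_pos]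
  simp

lemma Matrix.fin_two_offDiag_eq_zero_of_conjTranspose_mul_self_eq_one
    {c : Matrix (Fin 2) (Fin 2) ℂ} (hc : cᴴ * c = 1) (h00 : c 0 0 = 1) :
    c 1 0 = 0 ∧ c 0 1 = 0 ∧ ‖c 1 1‖ = 1 := by
  have entry (i j : Fin 2) : ∑ k, star (c k i) * c k j = (1 : Matrix (Fin 2) (Fin 2) ℂ) i j := by
    rw [← hc]; rfl
  have e00 := entry 0 0
  have e01 := entry 0 1
  have e11 := entry 1 1
  simp only [Fin.sum_univ_two, RCLike.star_def, h00, map_one, one_mul, Complex.conj_mul',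
    Matrix.one_apply_eq, Matrix.one_apply_ne one_ne_zero.symm] at e00 e01 e11
  have h10 : c 1 0 = 0 := by simpa using e00
  have h01 : c 0 1 = 0 := by simpa [h10] using e01
  refine ⟨h10, h01, ?_⟩
  rw [h01, norm_zero, Complex.ofReal_zero, zero_pow two_ne_zero, zero_add] at e11
  exact (pow_eq_one_iff_of_nonneg (norm_nonneg _) two_ne_zero).1 (by exact_mod_cast e11)

section Shifts

variable {S1 S2 : L2 ℕ ℂ →L[ℂ] L2 ℕ ℂ}

lemma isCuntzFamily_of_apply_el (hS1 : ∀ n : ℕ, S1 (el n (1 : ℂ)) = el (2 * n) (1 : ℂ))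
    (hS2 : ∀ n : ℕ, S2 (el n (1 : ℂ)) = el (2 * n + 1) (1 : ℂ)) :
    IsCuntzFamily ![S1, S2] := by
  have inj1 : (fun n : ℕ => 2 * n).Injective := fun a b h => by simpa using h
  have inj2 : (fun n : ℕ => 2 * n + 1).Injective := fun a b h => by simpa using h
  have hit1 := apply_apply_of_apply_el inj1 hS1
  have hit2 := apply_apply_of_apply_el inj2 hS2
  have miss1 (f : L2 ℕ ℂ) (k : ℕ) : S1 f (2 * k + 1) = 0 :=
    apply_apply_of_notMem_range hS1 f fun ⟨j, hj⟩ => by omega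
  have miss2 (f : L2 ℕ ℂ) (k : ℕ) : S2 f (2 * k) = 0 :=
    apply_apply_of_notMem_range hS2 f fun ⟨j, hj⟩ => by beta_reduce at hj; omega
  have adj1 := adjoint_apply_of_apply_el hS1
  have adj2 := adjoint_apply_of_apply_el hS2
  refine ⟨?_, ?_, ?_⟩
  · intro i
    fin_cases i <;> ext f k <;> simp [star_eq_adjoint, adj1, adj2, hit1, hit2]
  · intro i j hij
    ext f k
    fin_cases i <;> fin_cases j <;> simp [star_eq_adjoint, adj1, adj2, miss1, miss2] at hij ⊢
  · ext f m
    obtain ⟨k, rfl | rfl⟩ := Nat.even_or_odd' m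
    · simp [star_eq_adjoint, adj1, hit1, miss2]
    · simp [star_eq_adjoint, adj2, hit2, miss1]

lemma smul_add_smul_apply_two_mul (hS1 : ∀ n : ℕ, S1 (el n (1 : ℂ)) = el (2 * n) (1 : ℂ))
    (hS2 : ∀ n : ℕ, S2 (el n (1 : ℂ)) = el (2 * n + 1) (1 : ℂ)) (a b : ℂ) (ξ : L2 ℕ ℂ)
    (k : ℕ) : (a • S1 ξ + b • S2 ξ) (2 * k) = a * ξ k := by
  change a * S1 ξ (2 * k) + b * S2 ξ (2 * k) = a * ξ k
  rw [apply_apply_of_apply_el (fun _ _ h => by simpa using h) hS1,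
    apply_apply_of_notMem_range hS2 ξ fun ⟨j, hj⟩ => by beta_reduce at hj; omega, mul_zero,
    add_zero]

lemma smul_add_smul_apply_two_mul_add_one
    (hS1 : ∀ n : ℕ, S1 (el n (1 : ℂ)) = el (2 * n) (1 : ℂ))
    (hS2 : ∀ n : ℕ, S2 (el n (1 : ℂ)) = el (2 * n + 1) (1 : ℂ)) (a b : ℂ) (ξ : L2 ℕ ℂ)
    (k : ℕ) : (a • S1 ξ + b • S2 ξ) (2 * k + 1) = b * ξ k := by
  change a * S1 ξ (2 * k + 1) + b * S2 ξ (2 * k + 1) = b * ξ k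
  rw [apply_apply_of_apply_el (fun _ _ h => by simpa using h) hS2,
    apply_apply_of_notMem_range hS1 ξ fun ⟨j, hj⟩ => by omega, mul_zero, zero_add]

lemma eq_zero_of_eq_smul_add_smul (hS1 : ∀ n : ℕ, S1 (el n (1 : ℂ)) = el (2 * n) (1 : ℂ))
    (hS2 : ∀ n : ℕ, S2 (el n (1 : ℂ)) = el (2 * n + 1) (1 : ℂ)) {ξ : L2 ℕ ℂ} {a b : ℂ}
    (h : ξ = a • S1 ξ + b • S2 ξ) (h0 : ξ 0 = 0) : ξ = 0 := by
  have coord (m : ℕ) : ξ m = (a • S1 ξ + b • S2 ξ) m := congrArg (fun f : L2 ℕ ℂ => f m) h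
  refine lp.ext <| funext fun m => ?_
  induction m using Nat.strong_induction_on with
  | _ m ih =>
    obtain ⟨k, rfl | rfl⟩ := Nat.even_or_odd' m
    · rcases Nat.eq_zero_or_pos k with rfl | hk
      · exact h0
      · rw [coord, smul_add_smul_apply_two_mul hS1 hS2, ih k (by omega)]
        simp
    · rw [coord, smul_add_smul_apply_two_mul_add_one hS1 hS2, ih k (by omega)]
      simp

lemma eq_one_of_eq_smul_add_smul (hS1 : ∀ n : ℕ, S1 (el n (1 : ℂ)) = el (2 * n) (1 : ℂ))
    (hS2 : ∀ n : ℕ, S2 (el n (1 : ℂ)) = el (2 * n + 1) (1 : ℂ)) {ξ : L2 ℕ ℂ} {a b : ℂ}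
    (h : ξ = a • S1 ξ + b • S2 ξ) (hξ : ξ ≠ 0) : a = 1 := by
  have hξ0 : ξ 0 ≠ 0 := fun h0 => hξ (eq_zero_of_eq_smul_add_smul hS1 hS2 h h0)
  have h0 : ξ (2 * 0) = a * ξ 0 := by
    rw [← smul_add_smul_apply_two_mul hS1 hS2 a b, ← h]
  exact (mul_eq_right₀ hξ0).1 h0.symm

lemma eq_smul_el_zero_of_apply_eq_self (hS1 : ∀ n : ℕ, S1 (el n (1 : ℂ)) = el (2 * n) (1 : ℂ))
    (hS2 : ∀ n : ℕ, S2 (el n (1 : ℂ)) = el (2 * n + 1) (1 : ℂ)) {ξ : L2 ℕ ℂ} (h : S1 ξ = ξ) :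
    ξ = ξ 0 • el 0 (1 : ℂ) := by
  have hS10 : S1 (el 0 (1 : ℂ)) = el 0 (1 : ℂ) := by simpa using hS1 0
  rw [← sub_eq_zero]
  refine eq_zero_of_eq_smul_add_smul hS1 hS2 (a := 1) (b := 0) ?_ ?_
  · rw [one_smul, zero_smul, add_zero, map_sub, map_smul, h, hS10]
  · change ξ 0 - ξ 0 * el 0 (1 : ℂ) 0 = 0
    rw [el_apply_self, mul_one, sub_self]

lemma apply_el_eq_smul_iff (hS1 : ∀ n : ℕ, S1 (el n (1 : ℂ)) = el (2 * n) (1 : ℂ))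
    (hS2 : ∀ n : ℕ, S2 (el n (1 : ℂ)) = el (2 * n + 1) (1 : ℂ)) (U : L2 ℕ ℂ →L[ℂ] L2 ℕ ℂ)
    (lam mu : ℂ) :
    (∀ n : ℕ, U (el n (1 : ℂ)) = (lam * mu ^ ((Nat.digits 2 n).count 1)) • el n (1 : ℂ)) ↔
      U (el 0 (1 : ℂ)) = lam • el 0 (1 : ℂ) ∧ U * S1 = S1 * U ∧ U * S2 = mu • (S2 * U) := by
  constructor
  · intro hU
    refine ⟨by simpa using hU 0, ext_el fun n => ?_, ext_el fun n => ?_⟩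
    · simp only [mul_apply_eq_comp, hS1, hU, map_smul, Nat.count_one_digits_two_mul]
    · simp only [mul_apply_eq_comp, smul_apply, hS2, hU, map_smul,
        Nat.count_one_digits_two_mul_add_one, smul_smul, pow_succ]
      congr 1
      ring
  · rintro ⟨h0, h1, h2⟩ n
    induction n using Nat.evenOddRec with
    | h0 => simpa using h0
    | h_even n ih =>
      rw [← hS1, ← mul_apply_eq_comp, h1, mul_apply_eq_comp, ih, map_smul, hS1,
        Nat.count_one_digits_two_mul]
    | h_odd n ih =>
      rw [← hS2, ← mul_apply_eq_comp, h2, smul_apply, mul_apply_eq_comp, ih, map_smul, hS2,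
        smul_smul, Nat.count_one_digits_two_mul_add_one, pow_succ]
      congr 1
      ring

lemma exists_commute_shifts_of_conj_cuntzEndo
    (hS1 : ∀ n : ℕ, S1 (el n (1 : ℂ)) = el (2 * n) (1 : ℂ))
    (hS2 : ∀ n : ℕ, S2 (el n (1 : ℂ)) = el (2 * n + 1) (1 : ℂ)) {U : L2 ℕ ℂ →L[ℂ] L2 ℕ ℂ}
    (hU : U ∈ unitary (L2 ℕ ℂ →L[ℂ] L2 ℕ ℂ))
    (h : ∀ x, U * cuntzEndo ![S1, S2] x * star U = cuntzEndo ![S1, S2] (U * x * star U)) :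
    ∃ lam mu : ℂ, ‖lam‖ = 1 ∧ ‖mu‖ = 1 ∧
      U (el 0 (1 : ℂ)) = lam • el 0 (1 : ℂ) ∧ U * S1 = S1 * U ∧ U * S2 = mu • (S2 * U) := by
  have : Nontrivial (L2 ℕ ℂ) := ⟨el 0 (1 : ℂ), 0, norm_ne_zero_iff.1 (by simp [norm_el])⟩
  obtain ⟨c, hc, hcu⟩ :=
    (isCuntzFamily_of_apply_el hS1 hS2).exists_unitary_matrix_of_conj_cuntzEndo (K := ℂ) hU h
  simp only [Fin.forall_fin_two, Fin.sum_univ_two, Matrix.cons_val_zero,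
    Matrix.cons_val_one] at hc
  obtain ⟨hUS1, hUS2⟩ := hc
  set ξ := U (el 0 (1 : ℂ)) with hξ_def
  have hξ_norm : ‖ξ‖ = 1 := by rw [norm_map_of_mem_unitary hU, norm_el, norm_one]
  have hξ : ξ = c 0 0 • S1 ξ + c 1 0 • S2 ξ := by
    simpa [← hξ_def, hS1 0] using congrArg (fun T => T (el 0 (1 : ℂ))) hUS1
  have h00 := eq_one_of_eq_smul_add_smul hS1 hS2 hξ (norm_ne_zero_iff.1 (by simp [hξ_norm]))
  obtain ⟨h10, h01, h11⟩ :=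
    Matrix.fin_two_offDiag_eq_zero_of_conjTranspose_mul_self_eq_one hcu h00
  have hξ_el : ξ = ξ 0 • el 0 (1 : ℂ) :=
    eq_smul_el_zero_of_apply_eq_self hS1 hS2 (by simpa [h00, h10] using hξ.symm)
  refine ⟨ξ 0, c 1 1, ?_, h11, hξ_el, by simpa [h00, h10] using hUS1, by simpa [h01] using hUS2⟩
  rwa [hξ_el, norm_smul, norm_el, norm_one, mul_one] at hξ_norm

end Shifts

/-- characterization of the unitaries on `ℓ²(ℕ)` commuting with the
endomorphism induced by the Cuntz family `S₁δ_n = δ_{2n}`, `S₂δ_n = δ_{2n+1}`. -/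
theorem statement18
    (S1 S2 U : L2 ℕ ℂ →L[ℂ] L2 ℕ ℂ)
    (hS1 : ∀ n : ℕ, S1 (el n (1 : ℂ)) = el (2 * n) (1 : ℂ))
    (hS2 : ∀ n : ℕ, S2 (el n (1 : ℂ)) = el (2 * n + 1) (1 : ℂ))
    (hU1 : ContinuousLinearMap.adjoint U * U = 1)
    (hU2 : U * ContinuousLinearMap.adjoint U = 1) :
    (∀ x : L2 ℕ ℂ →L[ℂ] L2 ℕ ℂ,
        U * (S1 * x * ContinuousLinearMap.adjoint S1 +
              S2 * x * ContinuousLinearMap.adjoint S2) * ContinuousLinearMap.adjoint U =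
          S1 * (U * x * ContinuousLinearMap.adjoint U) * ContinuousLinearMap.adjoint S1 +
            S2 * (U * x * ContinuousLinearMap.adjoint U) * ContinuousLinearMap.adjoint S2) ↔
      ∃ lam mu : ℂ, ‖lam‖ = 1 ∧ ‖mu‖ = 1 ∧
        ∀ n : ℕ, U (el n (1 : ℂ)) = (lam * mu ^ ((Nat.digits 2 n).count 1)) • el n (1 : ℂ) := by
  have hU : U ∈ unitary (L2 ℕ ℂ →L[ℂ] L2 ℕ ℂ) := by
    rw [Unitary.mem_iff, star_eq_adjoint]
    exact ⟨hU1, hU2⟩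
  have hρ (x : L2 ℕ ℂ →L[ℂ] L2 ℕ ℂ) :
      cuntzEndo ![S1, S2] x = S1 * x * star S1 + S2 * x * star S2 := by
    simp [cuntzEndo, Fin.sum_univ_two]
  simp only [← star_eq_adjoint, ← hρ, apply_el_eq_smul_iff hS1 hS2]
  constructor
  · exact exists_commute_shifts_of_conj_cuntzEndo hS1 hS2 hU
  · rintro ⟨-, mu, -, hmu, -, h1, h2⟩
    refine conj_cuntzEndo_of_mul_eq_smul (c := ![1, mu]) (fun i => ?_) (fun i => ?_)
    · fin_cases i
      · simp
      · simp [Complex.conj_mul', hmu]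
    · fin_cases i
      · simpa using h1
      · simpa using h2
end
end
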